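/- Let g ∈ (0, 1/4) be real and set x := 1/(2√g). Then for every m ∈ ℕ, the quantity √g·U_{m+1}(x) is nonzero and X_m(g) = U_m(x)/(√g·U_{m+1}(x)), where U_n denotes the n-th Chebyshev polynomial of the second kind (with U_0 = 1, U_1(x) = 2x). -/

import Mathlib

/-- The sequence `X_m(g)` defined by `X_0 = 1`, `X_{m+1} = 1/(1 - g X_m)`. -/
noncomputable def Xseq (g : ℝ) : ℕ → ℝ
  | 0 => 1
  | m + 1 => 1 / (1 - g * Xseq g m)

/-!
With `s = √g` and `2 s x = 1`, the three-term recurrence of the Chebyshev polynomials reads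
`s U_{n+2}(x) = U_{n+1}(x) - s U_n(x)`, which says precisely that the ratios
`U_m(x) / (s U_{m+1}(x))` obey the recursion `X_{m+1} = 1/(1 - s² X_m)` defining `X_m(g)`.
The ratios are well defined because `x > 1` when `g < 1/4`, and on `[1, ∞)` every `U_n` is
positive.
-/

open Polynomial Polynomial.Chebyshev

namespace Polynomial.Chebyshev

section OrderedRing

variable {R : Type*} [CommRing R] [LinearOrder R] [IsStrictOrderedRing R] {x : R}

lemma eval_U_pos_and_le_succ (hx : 1 ≤ x) (n : ℕ) :
    0 < (U R n).eval x ∧ (U R n).eval x ≤ (U R ((n : ℤ) + 1)).eval x := by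
  induction n with
  | zero =>
    simp only [CharP.cast_eq_zero, zero_add, U_zero, U_one, eval_one, eval_mul, eval_ofNat,
      eval_X, zero_lt_one, true_and]
    linarith
  | succ n ih =>
    obtain ⟨hpos, hle⟩ := ih
    have hrec : (U R ((n : ℤ) + 2)).eval x
        = 2 * x * (U R ((n : ℤ) + 1)).eval x - (U R n).eval x := by
      simp [U_add_two]
    push_cast
    rw [add_assoc, one_add_one_eq_two, hrec]
    constructor
    · linarith
    · nlinarith

lemma eval_U_pos (hx : 1 ≤ x) (n : ℕ) : 0 < (U R n).eval x :=
  (eval_U_pos_and_le_succ hx n).1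

end OrderedRing

lemma mul_eval_U_add_two {R : Type*} [CommRing R] {s x : R} (hsx : 2 * s * x = 1) (n : ℤ) :
    s * (U R (n + 2)).eval x = (U R (n + 1)).eval x - s * (U R n).eval x := by
  simp only [U_add_two, eval_sub, eval_mul, eval_X, eval_ofNat]
  linear_combination (U R (n + 1)).eval x * hsx

end Polynomial.Chebyshev

lemma Xseq_eq_eval_U_div {g s x : ℝ} (hs : s ^ 2 = g) (hsx : 2 * s * x = 1)
    (hU : ∀ n : ℕ, (U ℝ n).eval x ≠ 0) (m : ℕ) :
    Xseq g m = (U ℝ m).eval x / (s * (U ℝ ((m : ℤ) + 1)).eval x) := by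
  have hs0 : s ≠ 0 := by rintro rfl; simp at hsx
  induction m with
  | zero =>
    simp only [Xseq, CharP.cast_eq_zero, zero_add, U_zero, U_one, eval_one, eval_mul, eval_X,
      eval_ofNat]
    rw [mul_left_comm, ← mul_assoc, hsx, div_one]
  | succ m ih =>
    have hU1 : (U ℝ ((m : ℤ) + 1)).eval x ≠ 0 := by exact_mod_cast hU (m + 1)
    have hrec := mul_eval_U_add_two hsx m
    rw [Xseq, ih, ← hs]
    push_cast
    rw [add_assoc, one_add_one_eq_two]
    have hdenom : 1 - s ^ 2 * ((U ℝ m).eval x / (s * (U ℝ ((m : ℤ) + 1)).eval x))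
        = s * (U ℝ ((m : ℤ) + 2)).eval x / (U ℝ ((m : ℤ) + 1)).eval x := by
      field_simp
      linear_combination -hrec
    rw [hdenom, one_div_div]

theorem stmt_1 (g : ℝ) (hg0 : 0 < g) (hg1 : g < 1/4) (x : ℝ) (hx : x = 1 / (2 * Real.sqrt g))
    (m : ℕ) :
    Real.sqrt g * (Polynomial.Chebyshev.U ℝ (m + 1 : ℤ)).eval x ≠ 0 ∧
    Xseq g m =
      (Polynomial.Chebyshev.U ℝ (m : ℤ)).eval x
        / (Real.sqrt g * (Polynomial.Chebyshev.U ℝ (m + 1 : ℤ)).eval x) := by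
  have hs0 : 0 < Real.sqrt g := Real.sqrt_pos.mpr hg0
  have hs_lt : Real.sqrt g < 1 / 2 := by
    rw [Real.sqrt_lt' (by norm_num)]; linarith
  have hsx : 2 * Real.sqrt g * x = 1 := by rw [hx]; field_simp
  have hx1 : 1 ≤ x := by rw [hx, le_div_iff₀ (by positivity)]; linarith
  have hU : ∀ n : ℕ, (U ℝ n).eval x ≠ 0 := fun n => (eval_U_pos hx1 n).ne'
  refine ⟨mul_ne_zero hs0.ne' (by exact_mod_cast hU (m + 1)), ?_⟩
  exact Xseq_eq_eval_U_div (Real.sq_sqrt hg0.le) hsx hU m
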